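/- arXiv:math-ph/0604046 — 2 statements merged into one kernel-verified Lean document; each statement's English description precedes it below -/
import Mathlib

section
/- With c1 = 1/105 and, as |x| → ∞, c2 = -(1/15)·sgn(x)·6^{1/3} + O(|x|^{-2/3}) and c3 = 6^{-1/3} + O(|x|^{-2/3}), where c2 = z0/30, c3 = z0^2/36 - sgn(x)·2/(3z0) and z0 is the real root of z0^3 = -48·sgn(x) + 24 z0 |x|^{-2/3} T. -/
/-!
With `s = sgn x`, `u = s z0` and `η = |x|^{-2/3} T` (so that `s² = 1`), the cubic becomes
`u³ = -48 + 24 u η`, a perturbation of `u³ = -48`, whose root is `-2 b` with `b = 6^{1/3}`.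
For `|η| ≤ 1/96` the root is confined to `[-4, -3]`, where the cofactor in
`u³ + 48 - 24 u η = (u + 2b)(u² - 2ub + 4b²) - 24 u η` is at least `27`; hence `|u + 2b| = O(η)`,
which is the claim for `c2`. For `c3`, the cubic rewrites `u²/36 - 2/(3u) - 1/b` as a quotient whose
numerator is `36 (u + 2b) - 24 u η b = O(η)` and whose denominator `-36 u b` is bounded below.
-/

open Real Set

lemma cbrt_six_pow_three : ((6:ℝ) ^ ((1:ℝ)/3)) ^ 3 = 6 := by
  rw [← rpow_natCast, ← rpow_mul (by norm_num)]
  norm_num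

lemma six_rpow_neg_one_third : (6:ℝ) ^ (-(1:ℝ)/3) = ((6:ℝ) ^ ((1:ℝ)/3))⁻¹ := by
  rw [neg_div, rpow_neg (by norm_num)]

lemma cbrt_six_mem_Icc : (6:ℝ) ^ ((1:ℝ)/3) ∈ Icc (3/2) 2 := by
  have hpos : 0 < (6:ℝ) ^ ((1:ℝ)/3) := by positivity
  have h3 := cbrt_six_pow_three
  constructor <;> nlinarith [sq_nonneg ((6:ℝ) ^ ((1:ℝ)/3))]

section PerturbedCubic

variable {u η : ℝ}

lemma mem_Icc_of_perturbed_cubic (hη : |η| ≤ 1/96) (hu : u ^ 3 = -48 + 24 * u * η) :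
    u ∈ Icc (-4) (-3) := by
  have hpert : |24 * u * η| ≤ |u| / 4 := by
    rw [abs_mul, abs_mul]
    nlinarith [abs_nonneg u]
  obtain ⟨hlo, hhi⟩ := abs_le.mp hpert
  have hneg : u < 0 := by
    by_contra! h
    rw [abs_of_nonneg h] at hhi
    nlinarith [mul_nonneg h (sq_nonneg (u - 1/2)), sq_nonneg (u - 1/8)]
  rw [abs_of_neg hneg] at hlo hhi
  constructor <;> nlinarith [sq_nonneg u]

lemma abs_add_two_cbrt_six_le_of_perturbed_cubic (hη : |η| ≤ 1/96)
    (hu : u ^ 3 = -48 + 24 * u * η) :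
    |u + 2 * (6:ℝ) ^ ((1:ℝ)/3)| ≤ 4 * |η| := by
  set b := (6:ℝ) ^ ((1:ℝ)/3)
  obtain ⟨hb1, hb2⟩ := cbrt_six_mem_Icc
  obtain ⟨hu1, hu2⟩ := mem_Icc_of_perturbed_cubic hη hu
  have hfactor : (u + 2 * b) * (u ^ 2 - 2 * u * b + 4 * b ^ 2) = 24 * u * η := by
    linear_combination hu + 8 * cbrt_six_pow_three
  have hquad : 27 ≤ u ^ 2 - 2 * u * b + 4 * b ^ 2 := by nlinarith
  have hpert : |24 * u * η| ≤ 96 * |η| := by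
    rw [abs_mul, abs_mul, abs_of_neg (by linarith : u < 0), abs_of_pos (by norm_num : (0:ℝ) < 24)]
    nlinarith [abs_nonneg η]
  rw [← hfactor, abs_mul, abs_of_pos (by linarith : 0 < u ^ 2 - 2 * u * b + 4 * b ^ 2)] at hpert
  nlinarith [abs_nonneg (u + 2 * b), abs_nonneg η]

lemma abs_c3_sub_le_of_perturbed_cubic (hη : |η| ≤ 1/96)
    (hu : u ^ 3 = -48 + 24 * u * η) :
    |u ^ 2 / 36 - 2 / (3 * u) - ((6:ℝ) ^ ((1:ℝ)/3))⁻¹| ≤ 3 * |η| := by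
  set b := (6:ℝ) ^ ((1:ℝ)/3)
  obtain ⟨hb1, hb2⟩ := cbrt_six_mem_Icc
  obtain ⟨hu1, hu2⟩ := mem_Icc_of_perturbed_cubic hη hu
  have hroot := abs_add_two_cbrt_six_le_of_perturbed_cubic hη hu
  have hden : 162 ≤ -36 * u * b := by nlinarith
  have hu0 : u ≠ 0 := by linarith
  have hb0 : b ≠ 0 := by linarith
  have hquot : u ^ 2 / 36 - 2 / (3 * u) - b⁻¹ =
      (36 * (u + 2 * b) - 24 * u * η * b) / (-36 * u * b) := by
    field_simp
    linear_combination 3 * b * hu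
  have hnum : |36 * (u + 2 * b) - 24 * u * η * b| ≤ 336 * |η| := by
    have hpert : |24 * u * η * b| ≤ 192 * |η| := by
      rw [abs_mul, abs_mul, abs_mul, abs_of_pos (by norm_num : (0:ℝ) < 24),
        abs_of_neg (by linarith : u < 0), abs_of_pos (by linarith : 0 < b)]
      nlinarith [abs_nonneg η, mul_nonneg (abs_nonneg η) (by linarith : 0 ≤ 4 + u)]
    calc _ ≤ |36 * (u + 2 * b)| + |24 * u * η * b| := abs_sub _ _
      _ ≤ 336 * |η| := by rw [abs_mul, abs_of_pos (by norm_num : (0:ℝ) < 36)]; linarith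
  rw [hquot, abs_div, abs_of_pos (by linarith : 0 < -36 * u * b), div_le_iff₀ (by linarith)]
  linarith [mul_le_mul_of_nonneg_left hden (abs_nonneg η), abs_nonneg η]

end PerturbedCubic

lemma c2_c3_bounds_of_mul_self_eq_one {s z η : ℝ} (hs : s * s = 1) (hη : |η| ≤ 1/96)
    (hz : z ^ 3 = -48 * s + 24 * z * η) :
    |z / 30 - (-(1/15) * s * (6:ℝ) ^ ((1:ℝ)/3))| ≤ |η| ∧
      |z ^ 2 / 36 - s * 2 / (3 * z) - (6:ℝ) ^ (-(1:ℝ)/3)| ≤ 3 * |η| := by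
  obtain ⟨u, rfl⟩ : ∃ u, z = s * u := ⟨s * z, by linear_combination -z * hs⟩
  have hu : u ^ 3 = -48 + 24 * u * η := by
    linear_combination s * hz - (u ^ 3 * (1 + s ^ 2) + 48 - 24 * u * η) * hs
  have hu0 : u ≠ 0 := by have := (mem_Icc_of_perturbed_cubic hη hu).2; intro h; linarith
  have hs0 : s ≠ 0 := by rintro rfl; norm_num at hs
  have hsabs : |s| = 1 := by rcases mul_self_eq_one_iff.mp hs with rfl | rfl <;> norm_num
  constructor
  · have hc2 : s * u / 30 - (-(1/15) * s * (6:ℝ) ^ ((1:ℝ)/3)) =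
        s * (u + 2 * (6:ℝ) ^ ((1:ℝ)/3)) / 30 := by ring
    rw [hc2, abs_div, abs_mul, hsabs, abs_of_pos (by norm_num : (0:ℝ) < 30)]
    linarith [abs_nonneg η, abs_add_two_cbrt_six_le_of_perturbed_cubic hη hu]
  · have hc3 : (s * u) ^ 2 / 36 - s * 2 / (3 * (s * u)) = u ^ 2 / 36 - 2 / (3 * u) := by
      field_simp
      linear_combination 3 * u ^ 3 * hs
    rw [hc3, six_rpow_neg_one_third]
    exact abs_c3_sub_le_of_perturbed_cubic hη hu

lemma rpow_neg_two_thirds_le_inv {K y : ℝ} (hK : 0 < K) (hy : K ^ ((3:ℝ)/2) ≤ y) :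
    y ^ (-(2:ℝ)/3) ≤ K⁻¹ :=
  calc y ^ (-(2:ℝ)/3) ≤ (K ^ ((3:ℝ)/2)) ^ (-(2:ℝ)/3) :=
        rpow_le_rpow_of_nonpos (by positivity) hy (by norm_num)
    _ = K⁻¹ := by rw [← rpow_mul hK.le]; norm_num [rpow_neg_one]

/-- Asymptotics of the coefficients c2 = z0/30 and c3 = z0²/36 - sgn(x)·2/(3z0):
c2 = -(1/15) sgn(x) 6^{1/3} + O(|x|^{-2/3}) and c3 = 6^{-1/3} + O(|x|^{-2/3})
as |x| → ∞, where z0 is the real root of z0³ = -48 sgn(x) + 24 z0 |x|^{-2/3} T. -/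
theorem c2_c3_asymptotics (T : ℝ) :
    ∃ C X : ℝ, 0 < C ∧ 0 < X ∧ ∀ x : ℝ, X ≤ |x| → ∀ z0 : ℝ,
      z0 ^ 3 = -48 * Real.sign x + 24 * z0 * |x| ^ (-(2:ℝ)/3) * T →
      |z0/30 - (-(1/15) * Real.sign x * (6:ℝ) ^ ((1:ℝ)/3))| ≤ C * |x| ^ (-(2:ℝ)/3) ∧
      |z0^2/36 - Real.sign x * 2/(3*z0) - (6:ℝ) ^ (-(1:ℝ)/3)| ≤ C * |x| ^ (-(2:ℝ)/3) := by
  set K := |T| + 1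
  have hK : 0 < K := by positivity
  refine ⟨3 * K, (96 * K) ^ ((3:ℝ)/2), by positivity, by positivity, fun x hx z0 hz0 => ?_⟩
  have hx0 : x ≠ 0 := by
    rintro rfl
    rw [abs_zero] at hx
    exact (rpow_pos_of_pos (by positivity : 0 < 96 * K) _).not_ge hx
  set ε := |x| ^ (-(2:ℝ)/3)
  have hε0 : 0 ≤ ε := by positivity
  have hεK : |ε * T| ≤ ε * K := by
    rw [abs_mul, abs_of_nonneg hε0]
    gcongr
    linarith
  have hη : |ε * T| ≤ 1/96 := by
    have := rpow_neg_two_thirds_le_inv (by positivity : 0 < 96 * K) hx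
    calc |ε * T| ≤ (96 * K)⁻¹ * K := hεK.trans (by gcongr)
      _ = 1/96 := by field_simp
  have hs : Real.sign x * Real.sign x = 1 := by
    rcases sign_apply_eq_of_ne_zero x hx0 with h | h <;> rw [h] <;> norm_num
  obtain ⟨hc2, hc3⟩ := c2_c3_bounds_of_mul_self_eq_one (z := z0) hs hη (by linear_combination hz0)
  constructor <;> linarith [abs_nonneg (ε * T)]
end

section
/- There exist constants c > 0, ε0 > 0 and x0 > 0 such that for all real x with |x| ≥ x0, the function g(ζ) = c1(ζ-z0)^{7/2} + c2(ζ-z0)^{5/2} + c3(ζ-z0)^{3/2} (with z0, c1, c2, c3 as determined by x, T) satisfies Re g(ζ) > c|ζ - z0|^{7/2} for ζ with Arg(ζ - z0) = 0, and Re g(ζ) < -c|ζ - z0|^{7/2} for ζ with |Arg(ζ - z0)| ∈ [6π/7 - ε0, 6π/7 + ε0]. -/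
lemma aux_w (w η : ℝ) (hcube : w^3 = 48 + η*w) (hη : |η| ≤ 1/100) :
    363/100 < w ∧ w < 91/25 := by
  obtain ⟨h1, h2⟩ := abs_le.mp hη
  have hw0 : 0 < w := by
    nlinarith [sq_nonneg w, sq_nonneg (w - 1), sq_nonneg (w + 1), sq_nonneg (w^2 - 1)]
  constructor
  · nlinarith [sq_nonneg (w - 3.63), sq_nonneg (w + 3.63), mul_pos hw0 hw0]
  · nlinarith [sq_nonneg (w - 3.64), sq_nonneg (w + 3.64), mul_pos hw0 hw0]

lemma aux_quad1 (z b t : ℝ) (hz1 : -(91/25) ≤ z) (hz2 : z ≤ -(363/100))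
    (hb : 5491/10000 ≤ b) (ht : 0 < t) :
    1/10000 < 1/105 + z/30*t + b*t^2 := by
  nlinarith [sq_nonneg (t - 1105/10000),
    mul_nonneg (by linarith : (0:ℝ) ≤ b - 5491/10000) (sq_nonneg t), mul_pos ht ht]

lemma aux_quad2 (u q t : ℝ) (hu : u ≤ 1094/10000) (hq : 3277/10000 ≤ q) (ht : 0 < t) :
    u*t - q*t^2 < 94/10000 := by
  nlinarith [sq_nonneg (t - 167/1000),
    mul_nonneg (by linarith : (0:ℝ) ≤ q - 3277/10000) (sq_nonneg t), mul_pos ht ht]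

open Real in
lemma aux_cos (ψ : ℝ) (h1 : 6*π/7 - 1/10000 ≤ ψ) (h2 : ψ ≤ 6*π/7 + 1/10000) :
    Real.cos (7*ψ/2) ≤ -(9996/10000) ∧
    (0 ≤ Real.cos (5*ψ/2) ∧ Real.cos (5*ψ/2) ≤ 9016/10000) ∧
    Real.cos (3*ψ/2) ≤ -(5968/10000) := by
  have hπ1 := Real.pi_gt_d6
  have hπ2 := Real.pi_lt_d6
  norm_num at hπ1 hπ2
  have hd : Real.cos (7*ψ/2) = -Real.cos (7*ψ/2 - 3*π) := by
    have ha := Real.cos_add_pi (7*ψ/2 - 3*π + 2*π)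
    have hb := Real.cos_add_two_pi (7*ψ/2 - 3*π)
    rw [show 7*ψ/2 - 3*π + 2*π + π = 7*ψ/2 by ring] at ha
    rw [ha, hb]
  have he : Real.cos (5*ψ/2) = Real.cos (5*ψ/2 - 2*π) := by
    have hb := Real.cos_add_two_pi (5*ψ/2 - 2*π)
    rw [show 5*ψ/2 - 2*π + 2*π = 5*ψ/2 by ring] at hb
    rw [hb]
  have hf : Real.cos (3*ψ/2) = -Real.cos (3*ψ/2 - π) := by
    have ha := Real.cos_add_pi (3*ψ/2 - π)
    rw [show 3*ψ/2 - π + π = 3*ψ/2 by ring] at ha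
    rw [ha]
  refine ⟨?_, ⟨?_, ?_⟩, ?_⟩
  · rw [hd]
    have hcos := Real.one_sub_sq_div_two_le_cos (x := 7*ψ/2 - 3*π)
    nlinarith [sq_nonneg (7*ψ/2 - 3*π)]
  · rw [he]
    have hcos := Real.one_sub_sq_div_two_le_cos (x := 5*ψ/2 - 2*π)
    nlinarith
  · rw [he]
    have hb1 : 448548/1000000 ≤ 5*ψ/2 - 2*π := by linarith
    have hb2 : 5*ψ/2 - 2*π ≤ 449049/1000000 := by linarith
    have habs : |5*ψ/2 - 2*π| ≤ 1 := by rw [abs_le]; constructor <;> linarith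
    have hcb := Real.cos_bound habs
    rw [abs_le, abs_of_nonneg (by linarith : (0:ℝ) ≤ 5*ψ/2 - 2*π)] at hcb
    have he2 : (5*ψ/2 - 2*π)^2 ≤ (449049/1000000)^2 := by nlinarith
    have he2' : (448548/1000000)^2 ≤ (5*ψ/2 - 2*π)^2 := by nlinarith
    have he4 : (5*ψ/2 - 2*π)^4 ≤ (449049/1000000)^4 := by
      nlinarith [sq_nonneg (5*ψ/2 - 2*π)]
    nlinarith [hcb.2]
  · rw [hf]
    have hcos := Real.one_sub_sq_div_two_le_cos (x := 3*ψ/2 - π)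
    nlinarith

lemma aux_eta (T x : ℝ) (hx : ((2400*(|T|+1))^3 : ℝ) ≤ |x|) :
    |24 * |x| ^ (-(2:ℝ)/3) * T| ≤ 1/100 := by
  have hA1 : (1:ℝ) ≤ |T| + 1 := by have := abs_nonneg T; linarith
  have hM : (0:ℝ) < 2400*(|T|+1) := by linarith
  have h23 : (2400*(|T|+1))^2 ≤ |x| ^ ((2:ℝ)/3) := by
    calc ((2400*(|T|+1)):ℝ)^2 = ((2400*(|T|+1))^3 : ℝ) ^ ((2:ℝ)/3) := by
          rw [← Real.rpow_natCast (2400*(|T|+1)) 3, ← Real.rpow_mul hM.le]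
          rw [show ((3:ℕ):ℝ) * (2/3) = ((2:ℕ):ℝ) by norm_num, Real.rpow_natCast]
      _ ≤ |x| ^ ((2:ℝ)/3) := Real.rpow_le_rpow (by positivity) hx (by norm_num)
  have hδ : |x| ^ (-(2:ℝ)/3) ≤ ((2400*(|T|+1))^2)⁻¹ := by
    rw [show (-(2:ℝ)/3) = -((2:ℝ)/3) by ring, Real.rpow_neg (abs_nonneg x)]
    exact inv_anti₀ (by positivity) h23
  have hδ0 : (0:ℝ) ≤ |x| ^ (-(2:ℝ)/3) := Real.rpow_nonneg (abs_nonneg x) _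
  have hT : |T| ≤ |T| + 1 := by linarith
  calc |24 * |x| ^ (-(2:ℝ)/3) * T| = 24 * |x| ^ (-(2:ℝ)/3) * |T| := by
        rw [abs_mul, abs_mul, abs_of_nonneg hδ0]; norm_num
    _ ≤ 24 * ((2400*(|T|+1))^2)⁻¹ * (|T|+1) := by
        apply mul_le_mul (by nlinarith) hT (abs_nonneg T) (by positivity)
    _ ≤ 1/100 := by
        rw [show (24:ℝ) * ((2400*(|T|+1))^2)⁻¹ * (|T|+1)
            = 24*(|T|+1) / (2400*(|T|+1))^2 by ring, div_le_iff₀ (by positivity)]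
        nlinarith

set_option maxHeartbeats 1000000 in
/-- There exist c > 0, ε0 > 0 and x0 > 0 such that for |x| ≥ x0,
Re g(z0 + r e^{iφ}) = r^{7/2}(c1 cos(7φ/2) + c2 cos(5φ/2)/r + c3 cos(3φ/2)/r²)
satisfies Re g > c|ζ-z0|^{7/2} on the ray φ = 0 and Re g < -c|ζ-z0|^{7/2} for
|φ| ∈ [6π/7 - ε0, 6π/7 + ε0], where z0 is the real root of the cubic and
c1 = 1/105, c2 = z0/30, c3 = z0²/36 - sgn(x)·2/(3z0). -/
theorem re_g_estimates (T : ℝ) :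
    ∃ c ε0 x0 : ℝ, 0 < c ∧ 0 < ε0 ∧ 0 < x0 ∧
      ∀ x : ℝ, x0 ≤ |x| → ∀ z0 : ℝ,
        z0 ^ 3 = -48 * Real.sign x + 24 * z0 * |x| ^ (-(2:ℝ)/3) * T →
        ∀ r φ : ℝ, 0 < r →
          ((φ = 0 →
            c * r ^ ((7:ℝ)/2) <
              r ^ ((7:ℝ)/2) * ((1/105) * Real.cos (7*φ/2)
                + (z0/30) * Real.cos (5*φ/2) / r
                + (z0^2/36 - Real.sign x * 2/(3*z0)) * Real.cos (3*φ/2) / r^2)) ∧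
          (6*Real.pi/7 - ε0 ≤ |φ| ∧ |φ| ≤ 6*Real.pi/7 + ε0 →
            r ^ ((7:ℝ)/2) * ((1/105) * Real.cos (7*φ/2)
                + (z0/30) * Real.cos (5*φ/2) / r
                + (z0^2/36 - Real.sign x * 2/(3*z0)) * Real.cos (3*φ/2) / r^2)
              < -c * r ^ ((7:ℝ)/2))) := by
  refine ⟨1/10000, 1/10000, (2400*(|T|+1))^3, by norm_num, by norm_num, by positivity, ?_⟩
  intro x hx z0 hz0 r φ hr
  have hη := aux_eta T x hx
  have hrp : 0 < r ^ ((7:ℝ)/2) := Real.rpow_pos_of_pos hr _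
  have ht : 0 < r⁻¹ := inv_pos.2 hr
  have hcos7 : Real.cos (7*φ/2) = Real.cos (7*|φ|/2) := by
    rcases abs_choice φ with h | h
    · rw [h]
    · rw [h, show 7*(-φ)/2 = -(7*φ/2) by ring, Real.cos_neg]
  have hcos5 : Real.cos (5*φ/2) = Real.cos (5*|φ|/2) := by
    rcases abs_choice φ with h | h
    · rw [h]
    · rw [h, show 5*(-φ)/2 = -(5*φ/2) by ring, Real.cos_neg]
  have hcos3 : Real.cos (3*φ/2) = Real.cos (3*|φ|/2) := by
    rcases abs_choice φ with h | h
    · rw [h]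
    · rw [h, show 3*(-φ)/2 = -(3*φ/2) by ring, Real.cos_neg]
  rcases lt_trichotomy x 0 with hxs | hxs | hxs
  · -- x < 0 : z0 ∈ (3.63, 3.64)
    have hs : Real.sign x = -1 := Real.sign_of_neg hxs
    rw [hs] at hz0 ⊢
    have hcube : z0^3 = 48 + (24 * |x| ^ (-(2:ℝ)/3) * T) * z0 := by
      rw [hz0]; ring
    obtain ⟨hw1, hw2⟩ := aux_w z0 _ hcube hη
    have hz0pos : (0:ℝ) < z0 := by linarith
    have hbE : z0^2/36 - (-1) * 2/(3*z0) = z0^2/36 + 2/(3*z0) := by ring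
    have h2z : 2/(1092/100) ≤ 2/(3*z0) := by
      rw [div_le_div_iff₀ (by norm_num) (by linarith)]
      linarith
    have hb : 5491/10000 ≤ z0^2/36 - (-1) * 2/(3*z0) := by
      rw [hbE]; nlinarith
    constructor
    · intro hφ
      subst hφ
      rw [show 7*(0:ℝ)/2 = 0 by norm_num, show 5*(0:ℝ)/2 = 0 by norm_num,
        show 3*(0:ℝ)/2 = 0 by norm_num, Real.cos_zero]
      have h2pos : (0:ℝ) < 2/(3*z0) := by positivity
      have key : (1:ℝ)/10000 < 1/105 * 1 + z0/30 * 1/r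
          + (z0^2/36 - (-1) * 2/(3*z0)) * 1/r^2 := by
        have t1 : 0 < z0/30 * 1/r := by positivity
        have t2 : 0 < (z0^2/36 - (-1) * 2/(3*z0)) * 1/r^2 := by
          apply mul_pos (mul_pos (by linarith) one_pos)
          positivity
        linarith
      have := mul_lt_mul_of_pos_left key hrp
      linarith
    · rintro ⟨hφ1, hφ2⟩
      obtain ⟨hA, ⟨hB0, hB1⟩, hC⟩ := aux_cos |φ| hφ1 hφ2
      rw [hcos7, hcos5, hcos3]
      have hu : (z0/30) * Real.cos (5*|φ|/2) ≤ 1094/10000 := by nlinarith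
      have hq : 3277/10000 ≤ -((z0^2/36 - (-1) * 2/(3*z0)) * Real.cos (3*|φ|/2)) := by
        nlinarith [mul_nonneg (by linarith : (0:ℝ) ≤ z0^2/36 - (-1) * 2/(3*z0) - 5491/10000)
          (by linarith : (0:ℝ) ≤ -Real.cos (3*|φ|/2))]
      have hq2 := aux_quad2 ((z0/30) * Real.cos (5*|φ|/2))
        (-((z0^2/36 - (-1) * 2/(3*z0)) * Real.cos (3*|φ|/2))) r⁻¹ hu hq ht
      have hconv1 : (z0/30) * Real.cos (5*|φ|/2) / r
          = (z0/30) * Real.cos (5*|φ|/2) * r⁻¹ := by rw [div_eq_mul_inv]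
      have hconv2 : (z0^2/36 - (-1) * 2/(3*z0)) * Real.cos (3*|φ|/2) / r^2
          = (z0^2/36 - (-1) * 2/(3*z0)) * Real.cos (3*|φ|/2) * (r⁻¹)^2 := by
        rw [div_eq_mul_inv, inv_pow]
      have key : 1/105 * Real.cos (7*|φ|/2) + (z0/30) * Real.cos (5*|φ|/2) / r
          + (z0^2/36 - (-1) * 2/(3*z0)) * Real.cos (3*|φ|/2) / r^2 < -(1/10000) := by
        rw [hconv1, hconv2]
        nlinarith [hq2, hA]
      have := mul_lt_mul_of_pos_left key hrp
      linarith
  · exfalso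
    rw [hxs] at hx
    simp at hx
    have : (0:ℝ) < (2400*(|T|+1))^3 := by positivity
    linarith
  · -- x > 0 : z0 ∈ (-3.64, -3.63)
    have hs : Real.sign x = 1 := Real.sign_of_pos hxs
    rw [hs] at hz0 ⊢
    have hcube : (-z0)^3 = 48 + (24 * |x| ^ (-(2:ℝ)/3) * T) * (-z0) := by
      rw [show ((-z0)^3 : ℝ) = -(z0^3) by ring, hz0]; ring
    obtain ⟨hw1, hw2⟩ := aux_w (-z0) _ hcube hη
    have hz1 : -(91/25) < z0 := by linarith
    have hz2 : z0 < -(363/100) := by linarith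
    have hz0neg : z0 < 0 := by linarith
    have hbE : z0^2/36 - 1 * 2/(3*z0) = z0^2/36 + 2/(-(3*z0)) := by
      rw [div_neg]; ring
    have h2z : 2/(1092/100) ≤ 2/(-(3*z0)) := by
      rw [div_le_div_iff₀ (by norm_num) (by linarith)]
      linarith
    have hb : 5491/10000 ≤ z0^2/36 - 1 * 2/(3*z0) := by
      rw [hbE]; nlinarith
    constructor
    · intro hφ
      subst hφ
      rw [show 7*(0:ℝ)/2 = 0 by norm_num, show 5*(0:ℝ)/2 = 0 by norm_num,
        show 3*(0:ℝ)/2 = 0 by norm_num, Real.cos_zero]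
      have key := aux_quad1 z0 (z0^2/36 - 1 * 2/(3*z0)) r⁻¹
        (by linarith) (by linarith) hb ht
      have key' : (1:ℝ)/10000 < 1/105 * 1 + z0/30 * 1/r
          + (z0^2/36 - 1 * 2/(3*z0)) * 1/r^2 := by
        have e1 : z0/30 * 1/r = z0/30*r⁻¹ := by rw [mul_one, div_eq_mul_inv]
        have e2 : (z0^2/36 - 1 * 2/(3*z0)) * 1/r^2
            = (z0^2/36 - 1 * 2/(3*z0)) * (r⁻¹)^2 := by
          rw [mul_one, div_eq_mul_inv, inv_pow]
        rw [e1, e2]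
        linarith [key]
      have := mul_lt_mul_of_pos_left key' hrp
      linarith
    · rintro ⟨hφ1, hφ2⟩
      obtain ⟨hA, ⟨hB0, hB1⟩, hC⟩ := aux_cos |φ| hφ1 hφ2
      rw [hcos7, hcos5, hcos3]
      have hmid : (z0/30) * Real.cos (5*|φ|/2) / r ≤ 0 := by
        apply div_nonpos_of_nonpos_of_nonneg _ hr.le
        exact mul_nonpos_of_nonpos_of_nonneg (by linarith) hB0
      have hthird : (z0^2/36 - 1 * 2/(3*z0)) * Real.cos (3*|φ|/2) / r^2 ≤ 0 := by
        apply div_nonpos_of_nonpos_of_nonneg _ (sq_nonneg r)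
        exact mul_nonpos_of_nonneg_of_nonpos (by linarith) (by linarith)
      have key : 1/105 * Real.cos (7*|φ|/2) + (z0/30) * Real.cos (5*|φ|/2) / r
          + (z0^2/36 - 1 * 2/(3*z0)) * Real.cos (3*|φ|/2) / r^2 < -(1/10000) := by
        nlinarith [hA]
      have := mul_lt_mul_of_pos_left key hrp
      linarith
end
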